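/- Suppose α solves the curve diffusion flow with generalised Neumann boundary conditions inside the cone on [0,T). Then the average curvature k̄(t) = L(t)⁻¹ ∫ k ds satisfies dk̄/dt = (2πω/L²) ∫ k_s² ds for all t ∈ [0,T), where ω = (2π)⁻¹ ∫ k ds is the (constant) rotation number. -/

import Mathlib

open MeasureTheory Real Set

noncomputable section

/-- The arclength derivative of a scalar quantity along the curve `γ`. -/
def aderiv (γ : ℝ → EuclideanSpace ℝ (Fin 2)) (f : ℝ → ℝ) : ℝ → ℝ :=
  fun u => ‖deriv γ u‖⁻¹ * deriv f u

/-- The arclength derivative of a vector quantity along the curve `γ`. -/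
def aderivV (γ : ℝ → EuclideanSpace ℝ (Fin 2)) (f : ℝ → EuclideanSpace ℝ (Fin 2)) :
    ℝ → EuclideanSpace ℝ (Fin 2) :=
  fun u => ‖deriv γ u‖⁻¹ • deriv f u

/-- The unit tangent vector. -/
def tangentVec (γ : ℝ → EuclideanSpace ℝ (Fin 2)) : ℝ → EuclideanSpace ℝ (Fin 2) :=
  fun u => ‖deriv γ u‖⁻¹ • deriv γ u

/-- The (outward) unit normal: the clockwise rotation of the unit tangent. -/
def normalVec (γ : ℝ → EuclideanSpace ℝ (Fin 2)) : ℝ → EuclideanSpace ℝ (Fin 2) :=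
  fun u => (WithLp.equiv 2 (Fin 2 → ℝ)).symm ![tangentVec γ u 1, -(tangentVec γ u 0)]

/-- The scalar curvature `k = -⟨α_ss, ν⟩`. -/
def curvature (γ : ℝ → EuclideanSpace ℝ (Fin 2)) : ℝ → ℝ :=
  fun u => -(inner ℝ (aderivV γ (aderivV γ γ) u) (normalVec γ u) : ℝ)

/-- The `n`-th arclength derivative of the curvature, `k_{s^n}`. -/
def curvDeriv (γ : ℝ → EuclideanSpace ℝ (Fin 2)) (n : ℕ) : ℝ → ℝ :=
  (aderiv γ)^[n] (curvature γ)

/-- `∫ f ds` along the curve. -/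
def curveIntegralDs (γ : ℝ → EuclideanSpace ℝ (Fin 2)) (f : ℝ → ℝ) : ℝ :=
  ∫ u in (-1:ℝ)..1, f u * ‖deriv γ u‖

/-- The length `L = ∫ ds`. -/
def clength (γ : ℝ → EuclideanSpace ℝ (Fin 2)) : ℝ :=
  ∫ u in (-1:ℝ)..1, ‖deriv γ u‖

/-- The average curvature `k̄ = L⁻¹ ∫ k ds`. -/
def avgCurv (γ : ℝ → EuclideanSpace ℝ (Fin 2)) : ℝ :=
  (clength γ)⁻¹ * curveIntegralDs γ (curvature γ)

/-- The oscillation of curvature `K_osc = L ∫ (k - k̄)² ds`. -/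
def Kosc (γ : ℝ → EuclideanSpace ℝ (Fin 2)) : ℝ :=
  clength γ * curveIntegralDs γ (fun u => (curvature γ u - avgCurv γ) ^ 2)

/-- The area enclosed by the curve and the cone, `A = ½ ∫ ⟨α, ν⟩ ds`. -/
def enclosedArea (γ : ℝ → EuclideanSpace ℝ (Fin 2)) : ℝ :=
  (1 / 2) * curveIntegralDs γ (fun u => (inner ℝ (γ u) (normalVec γ u) : ℝ))

/-- The unit vector in direction `θ`. -/
def coneDir (θ : ℝ) : EuclideanSpace ℝ (Fin 2) :=
  (WithLp.equiv 2 (Fin 2 → ℝ)).symm ![Real.cos θ, Real.sin θ]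

/-- `α` solves the curve diffusion flow `∂α/∂t = k_ss ν` with generalised Neumann
boundary conditions inside the cone with angles `θ₂ < θ₁`, for times `t ∈ J`. -/
structure IsCDFlow (θ₁ θ₂ : ℝ) (J : Set ℝ) (α : ℝ → ℝ → EuclideanSpace ℝ (Fin 2)) : Prop where
  angle_nonneg : 0 ≤ θ₂
  angle_lt : θ₂ < θ₁
  angle_pi : θ₁ < Real.pi
  smooth : ContDiff ℝ (⊤ : ℕ∞) (fun p : ℝ × ℝ => α p.1 p.2)
  regular : ∀ t ∈ J, ∀ u ∈ Icc (-1:ℝ) 1, deriv (fun u => α u t) u ≠ 0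
  flow : ∀ t ∈ J, ∀ u ∈ Icc (-1:ℝ) 1,
    HasDerivAt (fun t => α u t)
      (curvDeriv (fun u => α u t) 2 u • normalVec (fun u => α u t) u) t
  bdry_left : ∀ t ∈ J, ∃ ρ : ℝ, 0 < ρ ∧ α (-1) t = ρ • coneDir θ₁
  bdry_right : ∀ t ∈ J, ∃ ρ : ℝ, 0 < ρ ∧ α 1 t = ρ • coneDir θ₂
  interior_cone : ∀ t ∈ J, ∀ u ∈ Ioo (-1:ℝ) 1,
    ∃ ρ θ : ℝ, 0 < ρ ∧ θ₂ < θ ∧ θ < θ₁ ∧ α u t = ρ • coneDir θ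
  neumann_left : ∀ t ∈ J,
    (inner ℝ (normalVec (fun u => α u t) (-1)) (coneDir (θ₁ + Real.pi / 2)) : ℝ) = 0
  neumann_right : ∀ t ∈ J,
    (inner ℝ (normalVec (fun u => α u t) 1) (coneDir (θ₂ + Real.pi / 2)) : ℝ) = 0
  noflux : ∀ t ∈ J,
    curvDeriv (fun u => α u t) 1 (-1) = 0 ∧ curvDeriv (fun u => α u t) 1 1 = 0


/-! ### Auxiliary lemmas -/

section Aux

abbrev E2 := EuclideanSpace ℝ (Fin 2)

lemma inner_two (x y : E2) : (inner ℝ x y : ℝ) = x 0 * y 0 + x 1 * y 1 := by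
  simp [PiLp.inner_apply, Fin.sum_univ_two, mul_comm]

def rotL : E2 →ₗ[ℝ] E2 where
  toFun x := (WithLp.equiv 2 (Fin 2 → ℝ)).symm ![x 1, -(x 0)]
  map_add' x y := by
    apply PiLp.ext; intro i; fin_cases i <;>
      · simp [WithLp.equiv_symm_apply, PiLp.toLp_apply]; try ring
  map_smul' c x := by
    apply PiLp.ext; intro i; fin_cases i <;>
      · simp [WithLp.equiv_symm_apply, PiLp.toLp_apply]; try ring

def rotC : E2 →L[ℝ] E2 := rotL.toContinuousLinearMap

lemma rotC_def (x : E2) : rotC x = (WithLp.equiv 2 (Fin 2 → ℝ)).symm ![x 1, -(x 0)] := rfl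

@[simp] lemma rotC_apply0 (x : E2) : rotC x 0 = x 1 := by
  simp [rotC, rotL, WithLp.equiv_symm_apply, PiLp.toLp_apply]
@[simp] lemma rotC_apply1 (x : E2) : rotC x 1 = -(x 0) := by
  simp [rotC, rotL, WithLp.equiv_symm_apply, PiLp.toLp_apply]

lemma inner_self_rot (x : E2) : (inner ℝ x (rotC x) : ℝ) = 0 := by
  simp [inner_two]; ring
lemma inner_rot_rot (x y : E2) : (inner ℝ (rotC x) (rotC y) : ℝ) = inner ℝ x y := by
  simp [inner_two]; ring
lemma inner_rot_left (x y : E2) : (inner ℝ (rotC x) y : ℝ) = -(inner ℝ x (rotC y) : ℝ) := by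
  simp [inner_two]
lemma rot_rot (x : E2) : rotC (rotC x) = -x := by
  apply PiLp.ext; intro i; fin_cases i <;> simp

@[simp] lemma coneDir0 (θ : ℝ) : coneDir θ 0 = Real.cos θ := by
  simp [coneDir, WithLp.equiv_symm_apply, PiLp.toLp_apply]
@[simp] lemma coneDir1 (θ : ℝ) : coneDir θ 1 = Real.sin θ := by
  simp [coneDir, WithLp.equiv_symm_apply, PiLp.toLp_apply]

lemma rot_coneDir (θ : ℝ) : rotC (coneDir (θ + Real.pi/2)) = coneDir θ := by
  apply PiLp.ext; intro i; fin_cases i <;>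
    simp [Real.cos_add_pi_div_two, Real.sin_add_pi_div_two]

lemma coneDir_unit (θ : ℝ) : (inner ℝ (coneDir θ) (coneDir θ) : ℝ) = 1 := by
  rw [inner_two]; simp only [coneDir0, coneDir1]
  nlinarith [Real.cos_sq_add_sin_sq θ]

/-- decomposition in the orthonormal basis {d, rot d} for unit d -/
lemma decomp_unit (d x : E2) (hd : (inner ℝ d d : ℝ) = 1) :
    x = (inner ℝ x d : ℝ) • d + (inner ℝ x (rotC d) : ℝ) • rotC d := by
  apply PiLp.ext; intro i
  rw [inner_two] at hd
  fin_cases i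
  · simp only [inner_two, PiLp.add_apply, PiLp.smul_apply, smul_eq_mul,
      rotC_apply0, rotC_apply1, Fin.mk_zero, Fin.mk_one]
    linear_combination (-(x 0)) * hd
  · simp only [inner_two, PiLp.add_apply, PiLp.smul_apply, smul_eq_mul,
      rotC_apply0, rotC_apply1, Fin.mk_zero, Fin.mk_one]
    linear_combination (-(x 1)) * hd

section Slice
variable {E : Type*} [NormedAddCommGroup E] [NormedSpace ℝ E]

lemma hasDerivAt_slice1 (G : ℝ × ℝ → E) (u t : ℝ) (hG : DifferentiableAt ℝ G (u, t)) :
    HasDerivAt (fun u' => G (u', t)) (fderiv ℝ G (u, t) (1, 0)) u := by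
  have h1 : HasDerivAt (fun u' : ℝ => (u', t)) ((1 : ℝ), (0 : ℝ)) u :=
    (hasDerivAt_id u).prodMk (hasDerivAt_const u t)
  exact (hG.hasFDerivAt.comp_hasDerivAt u h1)

lemma hasDerivAt_slice2 (G : ℝ × ℝ → E) (u t : ℝ) (hG : DifferentiableAt ℝ G (u, t)) :
    HasDerivAt (fun t' => G (u, t')) (fderiv ℝ G (u, t) (0, 1)) t := by
  have h1 : HasDerivAt (fun t' : ℝ => (u, t')) ((0 : ℝ), (1 : ℝ)) t :=
    (hasDerivAt_const t u).prodMk (hasDerivAt_id t)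
  exact (hG.hasFDerivAt.comp_hasDerivAt t h1)

/-- Clairaut for the two partials in directions (1,0), (0,1). -/
lemma fderiv_swap (G : ℝ × ℝ → E) (p : ℝ × ℝ) (hG : ContDiffAt ℝ (⊤ : ℕ∞) G p) :
    fderiv ℝ (fun q => fderiv ℝ G q (1, 0)) p (0, 1)
      = fderiv ℝ (fun q => fderiv ℝ G q (0, 1)) p (1, 0) := by
  have hsymm : IsSymmSndFDerivAt ℝ G p := hG.isSymmSndFDerivAt (by rw [minSmoothness_of_isRCLikeNormedField]; exact WithTop.coe_le_coe.mpr (le_top : (2 : ℕ∞) ≤ ⊤))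
  have hd : DifferentiableAt ℝ (fderiv ℝ G) p :=
    (hG.fderiv_right (m := (⊤ : ℕ∞)) (by simp)).differentiableAt (by simp)
  have h1 : fderiv ℝ (fun q => fderiv ℝ G q (1, 0)) p
      = (fderiv ℝ (fderiv ℝ G) p).flip (1, 0) := by
    rw [fderiv_clm_apply hd (differentiableAt_const _)]
    simp
  have h2 : fderiv ℝ (fun q => fderiv ℝ G q (0, 1)) p
      = (fderiv ℝ (fderiv ℝ G) p).flip (0, 1) := by
    rw [fderiv_clm_apply hd (differentiableAt_const _)]
    simp
  rw [h1, h2]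
  simpa using hsymm (0, 1) (1, 0)

lemma diffAt_of_contDiffOn {N : Set (ℝ × ℝ)} (hN : IsOpen N) {f : ℝ × ℝ → E}
    (hf : ContDiffOn ℝ (⊤ : ℕ∞) f N) {p : ℝ × ℝ} (hp : p ∈ N) : DifferentiableAt ℝ f p :=
  (hf.contDiffAt (hN.mem_nhds hp)).differentiableAt (by simp)

end Slice

lemma param_hasDerivAt (N : Set (ℝ × ℝ)) (hN : IsOpen N) (g : ℝ × ℝ → ℝ)
    (hg : ContDiffOn ℝ (⊤ : ℕ∞) g N) (t₀ δ : ℝ) (hδ : 0 < δ)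
    (hsub : Icc (-1:ℝ) 1 ×ˢ Metric.closedBall t₀ δ ⊆ N) :
    HasDerivAt (fun t => ∫ u in (-1:ℝ)..1, g (u, t))
      (∫ u in (-1:ℝ)..1, fderiv ℝ g (u, t₀) (0, 1)) t₀ := by
  have hIoc : Set.uIoc (-1:ℝ) 1 ⊆ Icc (-1:ℝ) 1 := by
    rw [uIoc_of_le (by norm_num : (-1:ℝ) ≤ 1)]
    exact Ioc_subset_Icc_self
  have hmem : ∀ u ∈ Icc (-1:ℝ) 1, ∀ x ∈ Metric.closedBall t₀ δ, (u, x) ∈ N := by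
    intro u hu x hx; exact hsub ⟨hu, hx⟩
  have hgc : ContinuousOn g N := hg.continuousOn
  have hf'c : ContinuousOn (fun p => fderiv ℝ g p ((0:ℝ), (1:ℝ))) N := by
    have h1 : ContinuousOn (fderiv ℝ g) N :=
      hg.continuousOn_fderiv_of_isOpen hN (by simp)
    exact (ContinuousLinearMap.apply ℝ ℝ ((0:ℝ), (1:ℝ))).continuous.comp_continuousOn h1
  have hK : IsCompact (Icc (-1:ℝ) 1 ×ˢ Metric.closedBall t₀ δ) :=
    isCompact_Icc.prod (isCompact_closedBall _ _)
  obtain ⟨C, hC⟩ := hK.exists_bound_of_continuousOn (hf'c.mono hsub)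
  have hslice : ∀ x ∈ Metric.closedBall t₀ δ,
      ContinuousOn (fun u => g (u, x)) (Icc (-1:ℝ) 1) := by
    intro x hx
    exact hgc.comp ((continuous_id.prodMk continuous_const).continuousOn)
      (fun u hu => hmem u hu x hx)
  have main := intervalIntegral.hasDerivAt_integral_of_dominated_loc_of_deriv_le
    (F := fun x u => g (u, x)) (F' := fun x u => fderiv ℝ g (u, x) ((0:ℝ),(1:ℝ)))
    (x₀ := t₀) (a := (-1:ℝ)) (b := 1) (μ := volume) (bound := fun _ => C) (Metric.ball_mem_nhds t₀ hδ)
    ?_ ?_ ?_ ?_ ?_ ?_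
  · exact main.2
  · filter_upwards [Metric.closedBall_mem_nhds t₀ hδ] with x hx
    exact ((hslice x hx).mono hIoc).aestronglyMeasurable measurableSet_uIoc
  · exact ((hslice t₀ (Metric.mem_closedBall_self hδ.le)).intervalIntegrable_of_Icc
      (by norm_num))
  · have : ContinuousOn (fun u => fderiv ℝ g (u, t₀) ((0:ℝ),(1:ℝ))) (Icc (-1:ℝ) 1) :=
      hf'c.comp ((continuous_id.prodMk continuous_const).continuousOn)
        (fun u hu => hmem u hu t₀ (Metric.mem_closedBall_self hδ.le))
    exact (this.mono hIoc).aestronglyMeasurable measurableSet_uIoc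
  · refine Filter.Eventually.of_forall (fun u => ?_)
    intro hu x hx
    exact hC _ ⟨hIoc hu, Metric.ball_subset_closedBall hx⟩
  · exact intervalIntegrable_const
  · refine Filter.Eventually.of_forall (fun u => ?_)
    intro hu x hx
    have hp : (u, x) ∈ N := hmem u (hIoc hu) x (Metric.ball_subset_closedBall hx)
    have : DifferentiableAt ℝ g (u, x) :=
      (hg.contDiffAt (hN.mem_nhds hp)).differentiableAt (by simp)
    exact hasDerivAt_slice2 g u x this

end Aux
set_option maxHeartbeats 2000000 in
/-- **Evolution of the average curvature.** -/
theorem evolution_average_curvature (θ₁ θ₂ T : ℝ)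
    (α : ℝ → ℝ → EuclideanSpace ℝ (Fin 2))
    (hflow : IsCDFlow θ₁ θ₂ (Ico 0 T) α) :
    ∀ t ∈ Ico (0:ℝ) T,
      HasDerivAt (fun t => avgCurv (fun u => α u t))
        (2 * Real.pi * ((2 * Real.pi)⁻¹ *
            curveIntegralDs (fun u => α u t) (curvature (fun u => α u t))) /
          clength (fun u => α u t) ^ 2 *
          curveIntegralDs (fun u => α u t) (fun u => curvDeriv (fun u => α u t) 1 u ^ 2)) t := by
  intro t₀ ht₀
  obtain ⟨ht₀0, ht₀T⟩ := ht₀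
  have hIcc : uIcc (-1:ℝ) 1 = Icc (-1:ℝ) 1 := uIcc_of_le (by norm_num)
  have hFs : ContDiff ℝ (⊤ : ℕ∞) (fun p : ℝ × ℝ => α p.1 p.2) := hflow.smooth
  set F : ℝ × ℝ → E2 := fun p => α p.1 p.2 with hFdef
  set A1 : ℝ × ℝ → E2 := fun p => fderiv ℝ F p (1, 0) with hA1def
  set A2 : ℝ × ℝ → E2 := fun p => fderiv ℝ F p (0, 1) with hA2def
  have hA1s : ContDiff ℝ (⊤ : ℕ∞) A1 := (hFs.fderiv_right (by simp)).clm_apply contDiff_const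
  have hA2s : ContDiff ℝ (⊤ : ℕ∞) A2 := (hFs.fderiv_right (by simp)).clm_apply contDiff_const
  have hF1 : ∀ u t : ℝ, HasDerivAt (fun u' => α u' t) (A1 (u, t)) u := fun u t =>
    hasDerivAt_slice1 F u t (hFs.differentiable (by simp) _)
  have hF2 : ∀ u t : ℝ, HasDerivAt (fun t' => α u t') (A2 (u, t)) t := fun u t =>
    hasDerivAt_slice2 F u t (hFs.differentiable (by simp) _)
  have hderiv1 : ∀ u t : ℝ, deriv (fun u' => α u' t) u = A1 (u, t) := fun u t => (hF1 u t).deriv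
  -- the open set of regular points
  set N : Set (ℝ × ℝ) := {p | A1 p ≠ 0} with hNdef
  have hN : IsOpen N := (isClosed_singleton.preimage hA1s.continuous).isOpen_compl
  have hJN : ∀ t ∈ Ico 0 T, ∀ u ∈ Icc (-1:ℝ) 1, (u, t) ∈ N := by
    intro t ht u hu
    have := hflow.regular t ht u hu
    rw [hderiv1 u t] at this
    exact this
  -- a compact rectangle neighbourhood inside N
  obtain ⟨δ, hδpos, hthick⟩ :=
    (isCompact_Icc.prod isCompact_singleton).exists_thickening_subset_open hN
      (by rintro ⟨u, t⟩ ⟨hu, ht⟩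
          rcases ht with rfl
          exact hJN t₀ ⟨ht₀0, ht₀T⟩ u hu)
  set δ' : ℝ := δ / 2 with hδ'def
  have hδ' : 0 < δ' := by positivity
  have hRN : Icc (-1:ℝ) 1 ×ˢ Metric.closedBall t₀ δ' ⊆ N := by
    rintro ⟨u, t⟩ ⟨hu, ht⟩
    apply hthick
    rw [Metric.mem_thickening_iff]
    refine ⟨(u, t₀), ⟨hu, rfl⟩, ?_⟩
    rw [Prod.dist_eq]
    simp only [dist_self]
    have h1 : dist t t₀ ≤ δ' := ht
    rw [max_eq_right dist_nonneg]
    have : δ' < δ := by rw [hδ'def]; linarith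
    linarith
  -- geometric quantities
  set V : ℝ × ℝ → ℝ := fun p => ‖A1 p‖ with hVdef
  have hVpos : ∀ p ∈ N, 0 < V p := fun p hp => norm_pos_iff.mpr hp
  have hVne : ∀ p ∈ N, V p ≠ 0 := fun p hp => (hVpos p hp).ne'
  have hVs : ContDiffOn ℝ (⊤ : ℕ∞) V N := hA1s.contDiffOn.norm ℝ (fun p hp => hp)
  set Tq : ℝ × ℝ → E2 := fun p => (V p)⁻¹ • A1 p with hTqdef
  have hTqs : ContDiffOn ℝ (⊤ : ℕ∞) Tq N := (hVs.inv hVne).smul hA1s.contDiffOn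
  set Nq : ℝ × ℝ → E2 := fun p => rotC (Tq p) with hNqdef
  have hNqs : ContDiffOn ℝ (⊤ : ℕ∞) Nq N := rotC.contDiff.comp_contDiffOn hTqs
  set DTq1 : ℝ × ℝ → E2 := fun p => fderiv ℝ Tq p (1, 0) with hDTq1def
  have hDTq1s : ContDiffOn ℝ (⊤ : ℕ∞) DTq1 N :=
    (hTqs.fderiv_of_isOpen hN (by simp)).clm_apply contDiffOn_const
  set DTq2 : ℝ × ℝ → E2 := fun p => fderiv ℝ Tq p (0, 1) with hDTq2def
  have hDTq2s : ContDiffOn ℝ (⊤ : ℕ∞) DTq2 N :=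
    (hTqs.fderiv_of_isOpen hN (by simp)).clm_apply contDiffOn_const
  set kq : ℝ × ℝ → ℝ := fun p => -((V p)⁻¹ * (inner ℝ (DTq1 p) (Nq p) : ℝ)) with hkqdef
  have hkqs : ContDiffOn ℝ (⊤ : ℕ∞) kq N := ((hVs.inv hVne).mul (hDTq1s.inner (𝕜 := ℝ) hNqs)).neg
  set Dkq1 : ℝ × ℝ → ℝ := fun p => fderiv ℝ kq p (1, 0) with hDkq1def
  have hDkq1s : ContDiffOn ℝ (⊤ : ℕ∞) Dkq1 N :=
    (hkqs.fderiv_of_isOpen hN (by simp)).clm_apply contDiffOn_const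
  set ksq : ℝ × ℝ → ℝ := fun p => (V p)⁻¹ * Dkq1 p with hksqdef
  have hksqs : ContDiffOn ℝ (⊤ : ℕ∞) ksq N := (hVs.inv hVne).mul hDkq1s
  set Dksq1 : ℝ × ℝ → ℝ := fun p => fderiv ℝ ksq p (1, 0) with hDksq1def
  have hDksq1s : ContDiffOn ℝ (⊤ : ℕ∞) Dksq1 N :=
    (hksqs.fderiv_of_isOpen hN (by simp)).clm_apply contDiffOn_const
  set kssq : ℝ × ℝ → ℝ := fun p => (V p)⁻¹ * Dksq1 p with hkssqdef
  have hkssqs : ContDiffOn ℝ (⊤ : ℕ∞) kssq N := (hVs.inv hVne).mul hDksq1s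
  -- differentiability at points of N
  have hTqd : ∀ p ∈ N, DifferentiableAt ℝ Tq p := fun p hp => diffAt_of_contDiffOn hN hTqs hp
  have hNqd : ∀ p ∈ N, DifferentiableAt ℝ Nq p := fun p hp => diffAt_of_contDiffOn hN hNqs hp
  have hkqd : ∀ p ∈ N, DifferentiableAt ℝ kq p := fun p hp => diffAt_of_contDiffOn hN hkqs hp
  have hksqd : ∀ p ∈ N, DifferentiableAt ℝ ksq p := fun p hp => diffAt_of_contDiffOn hN hksqs hp
  have hDTq1d : ∀ p ∈ N, DifferentiableAt ℝ DTq1 p := fun p hp =>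
    diffAt_of_contDiffOn hN hDTq1s hp
  -- agreement with the geometric definitions
  have hTagree : ∀ u t : ℝ, tangentVec (fun u' => α u' t) u = Tq (u, t) := by
    intro u t
    simp only [tangentVec, hderiv1 u t, hTqdef, hVdef]
  have hNagree : ∀ u t : ℝ, normalVec (fun u' => α u' t) u = Nq (u, t) := by
    intro u t
    simp only [normalVec, hTagree u t, hNqdef, rotC_def]
  have hkagree : ∀ u t : ℝ, (u, t) ∈ N → curvature (fun u' => α u' t) u = kq (u, t) := by
    intro u t hp
    have h1 : aderivV (fun u'' => α u'' t) (fun u'' => α u'' t) = fun u' => Tq (u', t) := by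
      funext u'
      simp only [aderivV, hderiv1 u' t, hTqdef, hVdef]
    have h2 : deriv (fun u' => Tq (u', t)) u = DTq1 (u, t) :=
      (hasDerivAt_slice1 Tq u t (hTqd _ hp)).deriv
    simp only [curvature, h1, aderivV, hderiv1 u t, h2, hNagree u t, hkqdef, hVdef,
      real_inner_smul_left]
  have hopenu : ∀ u t : ℝ, (u, t) ∈ N → {u' : ℝ | (u', t) ∈ N} ∈ nhds u := by
    intro u t hp
    exact (hN.preimage (continuous_id.prodMk continuous_const)).mem_nhds hp
  have hopent : ∀ u t : ℝ, (u, t) ∈ N → {t' : ℝ | (u, t') ∈ N} ∈ nhds t := by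
    intro u t hp
    exact (hN.preimage (continuous_const.prodMk continuous_id)).mem_nhds hp
  have hksagree : ∀ u t : ℝ, (u, t) ∈ N → curvDeriv (fun u' => α u' t) 1 u = ksq (u, t) := by
    intro u t hp
    have hev : curvature (fun u'' => α u'' t) =ᶠ[nhds u] fun u' => kq (u', t) := by
      filter_upwards [hopenu u t hp] with u' hu'
      exact hkagree u' t hu'
    have h2 : deriv (fun u' => kq (u', t)) u = Dkq1 (u, t) :=
      (hasDerivAt_slice1 kq u t (hkqd _ hp)).deriv
    simp only [curvDeriv, Function.iterate_one, aderiv, hev.deriv_eq, h2, hderiv1 u t,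
      hksqdef, hVdef]
  have hkssagree : ∀ u t : ℝ, (u, t) ∈ N → curvDeriv (fun u' => α u' t) 2 u = kssq (u, t) := by
    intro u t hp
    have hev : curvDeriv (fun u'' => α u'' t) 1 =ᶠ[nhds u] fun u' => ksq (u', t) := by
      filter_upwards [hopenu u t hp] with u' hu'
      exact hksagree u' t hu'
    have h2 : deriv (fun u' => ksq (u', t)) u = Dksq1 (u, t) :=
      (hasDerivAt_slice1 ksq u t (hksqd _ hp)).deriv
    have h3 : curvDeriv (fun u' => α u' t) 2 u
        = aderiv (fun u' => α u' t) (curvDeriv (fun u' => α u' t) 1) u := by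
      simp only [curvDeriv]
      rw [show (2 : ℕ) = 1 + 1 from rfl, Function.iterate_succ_apply']
    rw [h3]
    simp only [aderiv, hev.deriv_eq, h2, hderiv1 u t, hkssqdef, hVdef]
  -- the unit tangent identities
  have hTunit : ∀ p ∈ N, (inner ℝ (Tq p) (Tq p) : ℝ) = 1 := by
    intro p hp
    have hv : ‖A1 p‖ ≠ 0 := by
      have := hVne p hp
      rwa [hVdef] at this
    show (inner ℝ ((V p)⁻¹ • A1 p) ((V p)⁻¹ • A1 p) : ℝ) = 1
    rw [real_inner_smul_left, real_inner_smul_right, real_inner_self_eq_norm_mul_norm]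
    have hV : V p = ‖A1 p‖ := by rw [hVdef]
    rw [hV]
    field_simp
  have hI1u : ∀ p ∈ N, (inner ℝ (DTq1 p) (Tq p) : ℝ) = 0 := by
    rintro ⟨u, t⟩ hp
    have hs := hasDerivAt_slice1 Tq u t (hTqd _ hp)
    have h1 : HasDerivAt (fun u' => (inner ℝ (Tq (u', t)) (Tq (u', t)) : ℝ))
        ((inner ℝ (Tq (u, t)) (DTq1 (u, t)) : ℝ) + (inner ℝ (DTq1 (u, t)) (Tq (u, t)) : ℝ)) u :=
      hs.inner (𝕜 := ℝ) hs
    have h2 : (fun u' => (inner ℝ (Tq (u', t)) (Tq (u', t)) : ℝ)) =ᶠ[nhds u] fun _ => 1 := by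
      filter_upwards [hopenu u t hp] with u' hu'
      exact hTunit _ hu'
    have h3 : HasDerivAt (fun u' => (inner ℝ (Tq (u', t)) (Tq (u', t)) : ℝ)) 0 u :=
      (hasDerivAt_const u (1 : ℝ)).congr_of_eventuallyEq h2
    have h4 := h1.unique h3
    have h5 := real_inner_comm (DTq1 (u, t)) (Tq (u, t))
    linarith
  have hI1t : ∀ p ∈ N, (inner ℝ (DTq2 p) (Tq p) : ℝ) = 0 := by
    rintro ⟨u, t⟩ hp
    have hs := hasDerivAt_slice2 Tq u t (hTqd _ hp)
    have h1 : HasDerivAt (fun t' => (inner ℝ (Tq (u, t')) (Tq (u, t')) : ℝ))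
        ((inner ℝ (Tq (u, t)) (DTq2 (u, t)) : ℝ) + (inner ℝ (DTq2 (u, t)) (Tq (u, t)) : ℝ)) t :=
      hs.inner (𝕜 := ℝ) hs
    have h2 : (fun t' => (inner ℝ (Tq (u, t')) (Tq (u, t')) : ℝ)) =ᶠ[nhds t] fun _ => 1 := by
      filter_upwards [hopent u t hp] with t' ht'
      exact hTunit _ ht'
    have h3 : HasDerivAt (fun t' => (inner ℝ (Tq (u, t')) (Tq (u, t')) : ℝ)) 0 t :=
      (hasDerivAt_const t (1 : ℝ)).congr_of_eventuallyEq h2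
    have h4 := h1.unique h3
    have h5 := real_inner_comm (DTq2 (u, t)) (Tq (u, t))
    linarith
  have hinnerDN : ∀ p ∈ N, (inner ℝ (DTq1 p) (Nq p) : ℝ) = -(V p * kq p) := by
    intro p hp
    have hv := hVne p hp
    have : kq p = -((V p)⁻¹ * (inner ℝ (DTq1 p) (Nq p) : ℝ)) := by rw [hkqdef]
    field_simp at this ⊢
    linarith
  have hDTq1_eq : ∀ p ∈ N, DTq1 p = (-(V p * kq p)) • Nq p := by
    intro p hp
    have hdec := decomp_unit (Tq p) (DTq1 p) (hTunit p hp)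
    have hnq : rotC (Tq p) = Nq p := rfl
    rw [hI1u p hp, hnq, hinnerDN p hp] at hdec
    simpa using hdec
  -- the flow equation at time t₀
  have hA2flow : ∀ u ∈ Icc (-1:ℝ) 1, A2 (u, t₀) = kssq (u, t₀) • Nq (u, t₀) := by
    intro u hu
    have hp : (u, t₀) ∈ N := hJN t₀ ⟨ht₀0, ht₀T⟩ u hu
    have h1 := hflow.flow t₀ ⟨ht₀0, ht₀T⟩ u hu
    have h2 := (hF2 u t₀).unique h1
    rw [h2, hkssagree u t₀ hp, hNagree u t₀]
  -- convenient facts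
  have hmemIcc : ∀ u ∈ Icc (-1:ℝ) 1, (u, t₀) ∈ N := fun u hu => hJN t₀ ⟨ht₀0, ht₀T⟩ u hu
  have hswap : ∀ p : ℝ × ℝ, fderiv ℝ A1 p (0, 1) = fderiv ℝ A2 p (1, 0) := by
    intro p
    rw [hA1def, hA2def]
    exact fderiv_swap F p (hFs.contDiffAt)
  have hIntOn : ∀ f : ℝ × ℝ → ℝ, ContinuousOn f N →
      IntervalIntegrable (fun u => f (u, t₀)) volume (-1 : ℝ) 1 := by
    intro f hf
    apply ContinuousOn.intervalIntegrable
    rw [hIcc]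
    exact hf.comp ((continuous_id.prodMk continuous_const).continuousOn) hmemIcc
  have hA2fc : Continuous (fun p : ℝ × ℝ => fderiv ℝ A2 p (1, 0)) := by
    have h : ContDiff ℝ (⊤ : ℕ∞) (fun p : ℝ × ℝ => fderiv ℝ A2 p (1, 0)) :=
      (hA2s.fderiv_right (by simp)).clm_apply contDiff_const
    exact h.continuous
  have hone : (1:ℝ) ∈ Icc (-1:ℝ) 1 := by norm_num
  have hmone : (-1:ℝ) ∈ Icc (-1:ℝ) 1 := by norm_num
  -- STEP L : the length integral
  have hLparam := param_hasDerivAt N hN V hVs t₀ δ' hδ' hRN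
  -- (a) the time derivative of V
  have hVt : ∀ u ∈ Icc (-1:ℝ) 1, fderiv ℝ V (u, t₀) (0, 1)
      = (inner ℝ (Tq (u, t₀)) (fderiv ℝ A2 (u, t₀) (1, 0)) : ℝ) := by
    intro u hu
    have hp := hmemIcc u hu
    have hn : ‖A1 (u, t₀)‖ ≠ 0 := by
      have := hVne _ hp
      rwa [hVdef] at this
    have hgA : HasDerivAt (fun t' => A1 (u, t')) (fderiv ℝ A1 (u, t₀) (0, 1)) t₀ :=
      hasDerivAt_slice2 A1 u t₀ (hA1s.differentiable (by simp) _)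
    have hφ := hgA.inner (𝕜 := ℝ) hgA
    have hφ0 : (inner ℝ (A1 (u, t₀)) (A1 (u, t₀)) : ℝ) ≠ 0 := by
      rw [real_inner_self_eq_norm_mul_norm]
      exact mul_ne_zero hn hn
    have hsq := hφ.sqrt hφ0
    have heq : (fun t' => Real.sqrt ((inner ℝ (A1 (u, t')) (A1 (u, t')) : ℝ)))
        = fun t' => V (u, t') := by
      funext t'
      rw [real_inner_self_eq_norm_mul_norm, Real.sqrt_mul_self (norm_nonneg _), hVdef]
    rw [heq] at hsq
    have hVd := hasDerivAt_slice2 V u t₀ (diffAt_of_contDiffOn hN hVs hp)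
    have huniq := hVd.unique hsq
    have hcomm : (inner ℝ (fderiv ℝ A1 (u, t₀) (0, 1)) (A1 (u, t₀)) : ℝ)
        = (inner ℝ (A1 (u, t₀)) (fderiv ℝ A1 (u, t₀) (0, 1)) : ℝ) := real_inner_comm _ _
    have hs : Real.sqrt ((inner ℝ (A1 (u, t₀)) (A1 (u, t₀)) : ℝ)) = V (u, t₀) := by
      rw [real_inner_self_eq_norm_mul_norm, Real.sqrt_mul_self (norm_nonneg _), hVdef]
    have hTqA : (inner ℝ (Tq (u, t₀)) (fderiv ℝ A2 (u, t₀) (1, 0)) : ℝ)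
        = (V (u, t₀))⁻¹ * (inner ℝ (A1 (u, t₀)) (fderiv ℝ A1 (u, t₀) (0, 1)) : ℝ) := by
      rw [show Tq (u, t₀) = (V (u, t₀))⁻¹ • A1 (u, t₀) from rfl, real_inner_smul_left, hswap]
    rw [huniq, hcomm, hs, hTqA]
    have hVn : V (u, t₀) ≠ 0 := hVne _ hp
    field_simp
    ring
  -- (c)-(d) first integration by parts
  have hFTC1 : (∫ u in (-1:ℝ)..1,
      ((inner ℝ (Tq (u, t₀)) (fderiv ℝ A2 (u, t₀) (1, 0)) : ℝ)
        + (inner ℝ (DTq1 (u, t₀)) (A2 (u, t₀)) : ℝ))) = 0 := by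
    have hderiv : ∀ u ∈ uIcc (-1:ℝ) 1,
        HasDerivAt (fun u' => (inner ℝ (Tq (u', t₀)) (A2 (u', t₀)) : ℝ))
          ((inner ℝ (Tq (u, t₀)) (fderiv ℝ A2 (u, t₀) (1, 0)) : ℝ)
            + (inner ℝ (DTq1 (u, t₀)) (A2 (u, t₀)) : ℝ)) u := by
      intro u hu
      rw [hIcc] at hu
      have hp := hmemIcc u hu
      exact (hasDerivAt_slice1 Tq u t₀ (hTqd _ hp)).inner (𝕜 := ℝ)
        (hasDerivAt_slice1 A2 u t₀ (hA2s.differentiable (by simp) _))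
    have hint : IntervalIntegrable (fun u =>
        ((inner ℝ (Tq (u, t₀)) (fderiv ℝ A2 (u, t₀) (1, 0)) : ℝ)
          + (inner ℝ (DTq1 (u, t₀)) (A2 (u, t₀)) : ℝ))) volume (-1 : ℝ) 1 := by
      exact hIntOn (fun p => (inner ℝ (Tq p) (fderiv ℝ A2 p (1, 0)) : ℝ)
          + (inner ℝ (DTq1 p) (A2 p) : ℝ))
        ((hTqs.continuousOn.inner (𝕜 := ℝ) (hA2fc.continuousOn)).add
          (hDTq1s.continuousOn.inner (𝕜 := ℝ) (hA2s.continuous.continuousOn)))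
    have h0 : ∀ u ∈ Icc (-1:ℝ) 1, (inner ℝ (Tq (u, t₀)) (A2 (u, t₀)) : ℝ) = 0 := by
      intro u hu
      rw [hA2flow u hu, real_inner_smul_right,
        show Nq (u, t₀) = rotC (Tq (u, t₀)) from rfl, inner_self_rot, mul_zero]
    rw [intervalIntegral.integral_eq_sub_of_hasDerivAt hderiv hint,
      h0 1 hone, h0 (-1) hmone, sub_zero]
  have hsplit1 := intervalIntegral.integral_add
    (hIntOn _ (hTqs.continuousOn.inner (𝕜 := ℝ) (hA2fc.continuousOn)))
    (hIntOn _ (hDTq1s.continuousOn.inner (𝕜 := ℝ) (hA2s.continuous.continuousOn)))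
    (a := (-1:ℝ)) (b := 1)
  -- (f) the integrand of the second term
  have hintg2 : ∀ u ∈ Icc (-1:ℝ) 1, (inner ℝ (DTq1 (u, t₀)) (A2 (u, t₀)) : ℝ)
      = -(kq (u, t₀) * Dksq1 (u, t₀)) := by
    intro u hu
    have hp := hmemIcc u hu
    have hVn := hVne _ hp
    rw [hDTq1_eq _ hp, hA2flow u hu, real_inner_smul_left, real_inner_smul_right,
      show Nq (u, t₀) = rotC (Tq (u, t₀)) from rfl, inner_rot_rot, hTunit _ hp,
      show kssq (u, t₀) = (V (u, t₀))⁻¹ * Dksq1 (u, t₀) from rfl]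
    field_simp
  -- (g) second integration by parts
  have hFTC2 : (∫ u in (-1:ℝ)..1,
      (Dkq1 (u, t₀) * ksq (u, t₀) + kq (u, t₀) * Dksq1 (u, t₀))) = 0 := by
    have hderiv : ∀ u ∈ uIcc (-1:ℝ) 1,
        HasDerivAt (fun u' => kq (u', t₀) * ksq (u', t₀))
          (Dkq1 (u, t₀) * ksq (u, t₀) + kq (u, t₀) * Dksq1 (u, t₀)) u := by
      intro u hu
      rw [hIcc] at hu
      have hp := hmemIcc u hu
      exact (hasDerivAt_slice1 kq u t₀ (hkqd _ hp)).mul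
        (hasDerivAt_slice1 ksq u t₀ (hksqd _ hp))
    have hint : IntervalIntegrable (fun u =>
        Dkq1 (u, t₀) * ksq (u, t₀) + kq (u, t₀) * Dksq1 (u, t₀)) volume (-1 : ℝ) 1 := by
      exact hIntOn (fun p => Dkq1 p * ksq p + kq p * Dksq1 p)
        ((hDkq1s.continuousOn.mul hksqs.continuousOn).add
          (hkqs.continuousOn.mul hDksq1s.continuousOn))
    have h0 : ∀ u ∈ Icc (-1:ℝ) 1, u = -1 ∨ u = 1 → ksq (u, t₀) = 0 := by
      rintro u hu (rfl | rfl)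
      · rw [← hksagree _ _ (hmemIcc _ hmone)]
        exact (hflow.noflux t₀ ⟨ht₀0, ht₀T⟩).1
      · rw [← hksagree _ _ (hmemIcc _ hone)]
        exact (hflow.noflux t₀ ⟨ht₀0, ht₀T⟩).2
    rw [intervalIntegral.integral_eq_sub_of_hasDerivAt hderiv hint,
      h0 1 hone (Or.inr rfl), h0 (-1) hmone (Or.inl rfl), mul_zero, mul_zero, sub_zero]
  have hsplit2 := intervalIntegral.integral_add
    (hIntOn (fun p => Dkq1 p * ksq p) (hDkq1s.continuousOn.mul hksqs.continuousOn))
    (hIntOn (fun p => kq p * Dksq1 p) (hkqs.continuousOn.mul hDksq1s.continuousOn))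
    (a := (-1:ℝ)) (b := 1)
  -- (h) rewrite Dkq1·ksq as ksq²·V
  have hDkq_eq : ∀ u ∈ Icc (-1:ℝ) 1,
      Dkq1 (u, t₀) * ksq (u, t₀) = ksq (u, t₀) ^ 2 * V (u, t₀) := by
    intro u hu
    have hp := hmemIcc u hu
    have hVn := hVne _ hp
    have h1 : ksq (u, t₀) = (V (u, t₀))⁻¹ * Dkq1 (u, t₀) := rfl
    rw [h1]
    field_simp
  -- assemble the derivative of the length integral
  have hLval : (∫ u in (-1:ℝ)..1, fderiv ℝ V (u, t₀) (0, 1))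
      = -(∫ u in (-1:ℝ)..1, ksq (u, t₀) ^ 2 * V (u, t₀)) := by
    have e1 : (∫ u in (-1:ℝ)..1, fderiv ℝ V (u, t₀) (0, 1))
        = ∫ u in (-1:ℝ)..1, (inner ℝ (Tq (u, t₀)) (fderiv ℝ A2 (u, t₀) (1, 0)) : ℝ) := by
      apply intervalIntegral.integral_congr
      intro u hu
      rw [hIcc] at hu
      exact hVt u hu
    have e2 : (∫ u in (-1:ℝ)..1, (inner ℝ (DTq1 (u, t₀)) (A2 (u, t₀)) : ℝ))
        = ∫ u in (-1:ℝ)..1, -(kq (u, t₀) * Dksq1 (u, t₀)) := by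
      apply intervalIntegral.integral_congr
      intro u hu
      rw [hIcc] at hu
      exact hintg2 u hu
    have e3 : (∫ u in (-1:ℝ)..1, Dkq1 (u, t₀) * ksq (u, t₀))
        = ∫ u in (-1:ℝ)..1, ksq (u, t₀) ^ 2 * V (u, t₀) := by
      apply intervalIntegral.integral_congr
      intro u hu
      rw [hIcc] at hu
      exact hDkq_eq u hu
    have e4 : (∫ u in (-1:ℝ)..1, -(kq (u, t₀) * Dksq1 (u, t₀)))
        = -(∫ u in (-1:ℝ)..1, kq (u, t₀) * Dksq1 (u, t₀)) := intervalIntegral.integral_neg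
    rw [e1]
    rw [hsplit1] at hFTC1
    rw [hsplit2] at hFTC2
    rw [e2, e4] at hFTC1
    rw [e3] at hFTC2
    linarith
  -- STEP W : the unit tangent is constant in time at the boundary points
  have hW : ∀ u₀ ∈ Icc (-1:ℝ) 1, ∀ d : E2, (inner ℝ d d : ℝ) = 1 →
      (∀ t ∈ Ico 0 T, (inner ℝ (Tq (u₀, t)) d : ℝ) = 0) →
      fderiv ℝ Tq (u₀, t₀) (0, 1) = 0 := by
    intro u₀ hu₀ d hd hzero
    have ht₀J : t₀ ∈ Ico 0 T := ⟨ht₀0, ht₀T⟩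
    have hpt : ∀ t ∈ Ico 0 T, (u₀, t) ∈ N := fun t ht => hJN t ht u₀ hu₀
    set μf : ℝ → ℝ := fun t => (inner ℝ (Tq (u₀, t)) (rotC d) : ℝ) with hμdef
    have hμcont : ContinuousOn μf (Ico 0 T) := by
      apply ContinuousOn.inner (𝕜 := ℝ) ?_ continuousOn_const
      exact hTqs.continuousOn.comp
        ((continuous_const.prodMk continuous_id).continuousOn) hpt
    have hμsq : ∀ t ∈ Ico 0 T, μf t * μf t = 1 := by
      intro t ht
      have hp := hpt t ht
      have hdec := decomp_unit d (Tq (u₀, t)) hd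
      rw [hzero t ht, zero_smul, zero_add] at hdec
      have hun := hTunit _ hp
      rw [hdec, real_inner_smul_left, real_inner_smul_right, inner_rot_rot, hd] at hun
      rw [hμdef]
      simpa using hun
    have hμconst : ∀ t ∈ Ico 0 T, μf t = μf t₀ := by
      intro t ht
      by_contra hne2
      have hsub : uIcc t t₀ ⊆ Ico 0 T := Set.ordConnected_Ico.uIcc_subset ht ht₀J
      have hIV := intermediate_value_uIcc (hμcont.mono hsub)
      have h0mem : (0:ℝ) ∈ uIcc (μf t) (μf t₀) := by
        rcases mul_self_eq_one_iff.mp (hμsq t ht) with h1 | h1 <;>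
          rcases mul_self_eq_one_iff.mp (hμsq t₀ ht₀J) with h2 | h2 <;>
            first
              | (exact absurd (h1.trans h2.symm) hne2)
              | (rw [h1, h2]; rw [mem_uIcc]; norm_num)
      obtain ⟨c, hc, hc0⟩ := hIV h0mem
      have := hμsq c (hsub hc)
      rw [hc0] at this
      norm_num at this
    have hTconst : ∀ t ∈ Ico 0 T, Tq (u₀, t) = Tq (u₀, t₀) := by
      intro t ht
      have hdect := decomp_unit d (Tq (u₀, t)) hd
      have hdect₀ := decomp_unit d (Tq (u₀, t₀)) hd
      rw [hzero t ht, zero_smul, zero_add] at hdect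
      rw [hzero t₀ ht₀J, zero_smul, zero_add] at hdect₀
      rw [hdect, hdect₀]
      rw [show (inner ℝ (Tq (u₀, t)) (rotC d) : ℝ) = μf t from rfl,
        show (inner ℝ (Tq (u₀, t₀)) (rotC d) : ℝ) = μf t₀ from rfl, hμconst t ht]
    set b : ℝ := min T (t₀ + δ') with hbdef
    have hb : t₀ < b := lt_min ht₀T (by linarith)
    have hwf0 : ∀ t ∈ Ioo t₀ b, fderiv ℝ Tq (u₀, t) (0, 1) = 0 := by
      intro t ht
      have htJ : t ∈ Ico 0 T := ⟨le_trans ht₀0 ht.1.le, lt_of_lt_of_le ht.2 (min_le_left _ _)⟩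
      have htIoo : t ∈ Ioo 0 T := ⟨lt_of_le_of_lt ht₀0 ht.1, htJ.2⟩
      have hp := hpt t htJ
      have hev2 : (fun t' => Tq (u₀, t')) =ᶠ[nhds t] (fun _ => Tq (u₀, t₀)) := by
        filter_upwards [isOpen_Ioo.mem_nhds htIoo] with t' ht'
        exact hTconst t' ⟨ht'.1.le, ht'.2⟩
      have h1 : HasDerivAt (fun t' => Tq (u₀, t')) 0 t :=
        (hasDerivAt_const t (Tq (u₀, t₀))).congr_of_eventuallyEq hev2
      have h2 := hasDerivAt_slice2 Tq u₀ t (hTqd _ hp)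
      exact h2.unique h1
    have hco : ContinuousAt (fun t => fderiv ℝ Tq (u₀, t) (0, 1)) t₀ := by
      have hp₀ := hpt t₀ ht₀J
      have h1 : ContinuousAt DTq2 (u₀, t₀) :=
        (hDTq2s.contDiffAt (hN.mem_nhds hp₀)).continuousAt
      exact h1.comp ((continuous_const.prodMk continuous_id).continuousAt)
    have hclos : t₀ ∈ closure (Ioo t₀ b) := by
      rw [closure_Ioo hb.ne]
      exact left_mem_Icc.mpr hb.le
    haveI hne : (nhdsWithin t₀ (Ioo t₀ b)).NeBot :=
      mem_closure_iff_nhdsWithin_neBot.mp hclos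
    have h1 : Filter.Tendsto (fun t => fderiv ℝ Tq (u₀, t) (0, 1))
        (nhdsWithin t₀ (Ioo t₀ b)) (nhds (fderiv ℝ Tq (u₀, t₀) (0, 1))) :=
      (hco.continuousWithinAt).tendsto
    have h2 : Filter.Tendsto (fun t => fderiv ℝ Tq (u₀, t) (0, 1))
        (nhdsWithin t₀ (Ioo t₀ b)) (nhds 0) := by
      apply Filter.Tendsto.congr' _ tendsto_const_nhds
      filter_upwards [self_mem_nhdsWithin] with t ht
      exact (hwf0 t ht).symm
    exact tendsto_nhds_unique h1 h2
  have hWl : fderiv ℝ Tq (-1, t₀) (0, 1) = 0 := by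
    apply hW (-1) hmone (coneDir θ₁) (coneDir_unit θ₁)
    intro t ht
    have hn := hflow.neumann_left t ht
    rw [hNagree (-1) t] at hn
    rw [show Nq (-1, t) = rotC (Tq (-1, t)) from rfl, inner_rot_left, rot_coneDir,
      neg_eq_zero] at hn
    exact hn
  have hWr : fderiv ℝ Tq (1, t₀) (0, 1) = 0 := by
    apply hW 1 hone (coneDir θ₂) (coneDir_unit θ₂)
    intro t ht
    have hn := hflow.neumann_right t ht
    rw [hNagree 1 t] at hn
    rw [show Nq (1, t) = rotC (Tq (1, t)) from rfl, inner_rot_left, rot_coneDir,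
      neg_eq_zero] at hn
    exact hn
  -- STEP M : the curvature integral
  set m : ℝ × ℝ → ℝ := fun p => -(inner ℝ (DTq1 p) (Nq p) : ℝ) with hmdef
  have hms : ContDiffOn ℝ (⊤ : ℕ∞) m N := (hDTq1s.inner (𝕜 := ℝ) hNqs).neg
  have hMparam := param_hasDerivAt N hN m hms t₀ δ' hδ' hRN
  have hfNq : ∀ p ∈ N, fderiv ℝ Nq p = rotC.comp (fderiv ℝ Tq p) := by
    intro p hp
    have h1 : HasFDerivAt Nq (rotC.comp (fderiv ℝ Tq p)) p :=
      (rotC.hasFDerivAt).comp p (hTqd p hp).hasFDerivAt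
    exact h1.fderiv
  set DDTq21 : ℝ × ℝ → E2 := fun p => fderiv ℝ DTq2 p (1, 0) with hDDTq21def
  have hDDTq21s : ContDiffOn ℝ (⊤ : ℕ∞) DDTq21 N :=
    (hDTq2s.fderiv_of_isOpen hN (by simp)).clm_apply contDiffOn_const
  have hswapT : ∀ p ∈ N, fderiv ℝ DTq1 p (0, 1) = DDTq21 p := by
    intro p hp
    rw [hDTq1def, hDDTq21def, hDTq2def]
    exact fderiv_swap Tq p (hTqs.contDiffAt (hN.mem_nhds hp))
  -- the time derivative of m
  have hMt : ∀ u ∈ Icc (-1:ℝ) 1, fderiv ℝ m (u, t₀) (0, 1)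
      = -((inner ℝ (DDTq21 (u, t₀)) (Nq (u, t₀)) : ℝ)) := by
    intro u hu
    have hp := hmemIcc u hu
    have hs2 := hasDerivAt_slice2 m u t₀ (diffAt_of_contDiffOn hN hms hp)
    have hs2' : HasDerivAt (fun t' => -(inner ℝ (DTq1 (u, t')) (Nq (u, t')) : ℝ))
        (-((inner ℝ (DTq1 (u, t₀)) (fderiv ℝ Nq (u, t₀) (0, 1)) : ℝ)
          + (inner ℝ (fderiv ℝ DTq1 (u, t₀) (0, 1)) (Nq (u, t₀)) : ℝ))) t₀ :=
      ((hasDerivAt_slice2 DTq1 u t₀ (hDTq1d _ hp)).inner (𝕜 := ℝ)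
        (hasDerivAt_slice2 Nq u t₀ (hNqd _ hp))).neg
    have huniq := hs2.unique hs2'
    rw [huniq, hswapT _ hp]
    have hzero1 : (inner ℝ (DTq1 (u, t₀)) (fderiv ℝ Nq (u, t₀) (0, 1)) : ℝ) = 0 := by
      rw [hfNq _ hp]
      rw [show (rotC.comp (fderiv ℝ Tq (u, t₀))) (0, 1) = rotC (DTq2 (u, t₀)) from rfl]
      rw [hDTq1_eq _ hp, show Nq (u, t₀) = rotC (Tq (u, t₀)) from rfl,
        real_inner_smul_left, inner_rot_rot, real_inner_comm, hI1t _ hp, mul_zero]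
    rw [hzero1, zero_add]
  -- third integration by parts
  have hFTC3 : (∫ u in (-1:ℝ)..1,
      ((inner ℝ (DTq2 (u, t₀)) (rotC (DTq1 (u, t₀))) : ℝ)
        + (inner ℝ (DDTq21 (u, t₀)) (Nq (u, t₀)) : ℝ))) = 0 := by
    have hderiv : ∀ u ∈ uIcc (-1:ℝ) 1,
        HasDerivAt (fun u' => (inner ℝ (DTq2 (u', t₀)) (Nq (u', t₀)) : ℝ))
          ((inner ℝ (DTq2 (u, t₀)) (rotC (DTq1 (u, t₀))) : ℝ)
            + (inner ℝ (DDTq21 (u, t₀)) (Nq (u, t₀)) : ℝ)) u := by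
      intro u hu
      rw [hIcc] at hu
      have hp := hmemIcc u hu
      have h1 := (hasDerivAt_slice1 DTq2 u t₀ (diffAt_of_contDiffOn hN hDTq2s hp)).inner
        (𝕜 := ℝ) (hasDerivAt_slice1 Nq u t₀ (hNqd _ hp))
      have h2 : fderiv ℝ Nq (u, t₀) (1, 0) = rotC (DTq1 (u, t₀)) := by
        rw [hfNq _ hp]; rfl
      have h3 : fderiv ℝ DTq2 (u, t₀) (1, 0) = DDTq21 (u, t₀) := rfl
      rw [h2, h3] at h1
      exact h1
    have hint : IntervalIntegrable (fun u =>
        ((inner ℝ (DTq2 (u, t₀)) (rotC (DTq1 (u, t₀))) : ℝ)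
          + (inner ℝ (DDTq21 (u, t₀)) (Nq (u, t₀)) : ℝ))) volume (-1 : ℝ) 1 := by
      exact hIntOn (fun p => (inner ℝ (DTq2 p) (rotC (DTq1 p)) : ℝ)
          + (inner ℝ (DDTq21 p) (Nq p) : ℝ))
        ((hDTq2s.continuousOn.inner (𝕜 := ℝ)
            (rotC.continuous.comp_continuousOn hDTq1s.continuousOn)).add
          (hDDTq21s.continuousOn.inner (𝕜 := ℝ) hNqs.continuousOn))
    rw [intervalIntegral.integral_eq_sub_of_hasDerivAt hderiv hint]
    rw [show DTq2 (1, t₀) = fderiv ℝ Tq (1, t₀) (0, 1) from rfl, hWr,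
      show DTq2 (-1, t₀) = fderiv ℝ Tq (-1, t₀) (0, 1) from rfl, hWl]
    simp
  -- the first summand vanishes pointwise
  have hzero2 : ∀ u ∈ Icc (-1:ℝ) 1,
      (inner ℝ (DTq2 (u, t₀)) (rotC (DTq1 (u, t₀))) : ℝ) = 0 := by
    intro u hu
    have hp := hmemIcc u hu
    rw [hDTq1_eq _ hp, show Nq (u, t₀) = rotC (Tq (u, t₀)) from rfl]
    rw [rotC.map_smul, real_inner_smul_right, rot_rot, inner_neg_right, hI1t _ hp]
    simp
  have hMval : (∫ u in (-1:ℝ)..1, fderiv ℝ m (u, t₀) (0, 1)) = 0 := by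
    have e1 : (∫ u in (-1:ℝ)..1, fderiv ℝ m (u, t₀) (0, 1))
        = ∫ u in (-1:ℝ)..1,
            -(((inner ℝ (DTq2 (u, t₀)) (rotC (DTq1 (u, t₀))) : ℝ)
              + (inner ℝ (DDTq21 (u, t₀)) (Nq (u, t₀)) : ℝ))) := by
      apply intervalIntegral.integral_congr
      intro u hu
      rw [hIcc] at hu
      show fderiv ℝ m (u, t₀) (0, 1)
        = -(((inner ℝ (DTq2 (u, t₀)) (rotC (DTq1 (u, t₀))) : ℝ)
          + (inner ℝ (DDTq21 (u, t₀)) (Nq (u, t₀)) : ℝ)))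
      rw [hMt u hu, hzero2 u hu, zero_add]
    rw [e1, intervalIntegral.integral_neg, hFTC3, neg_zero]
  -- FINAL ASSEMBLY
  rw [hLval] at hLparam
  rw [hMval] at hMparam
  have hL0 : (0:ℝ) < ∫ u in (-1:ℝ)..1, V (u, t₀) := by
    apply intervalIntegral.intervalIntegral_pos_of_pos_on
    · exact hIntOn V hVs.continuousOn
    · intro u hu
      exact hVpos _ (hmemIcc u ⟨hu.1.le, hu.2.le⟩)
    · norm_num
  have hcomb := (hLparam.inv hL0.ne').mul hMparam
  have hLid : ∀ t : ℝ, clength (fun u => α u t) = ∫ u in (-1:ℝ)..1, V (u, t) := by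
    intro t
    apply intervalIntegral.integral_congr
    intro u hu
    show ‖deriv (fun u' => α u' t) u‖ = V (u, t)
    rw [hderiv1 u t, hVdef]
  have hMid : ∀ t ∈ Metric.closedBall t₀ δ',
      curveIntegralDs (fun u => α u t) (curvature (fun u => α u t))
        = ∫ u in (-1:ℝ)..1, m (u, t) := by
    intro t ht
    apply intervalIntegral.integral_congr
    intro u hu
    rw [hIcc] at hu
    have hp : (u, t) ∈ N := hRN ⟨hu, ht⟩
    have hVn := hVne _ hp
    show curvature (fun u' => α u' t) u * ‖deriv (fun u' => α u' t) u‖ = m (u, t)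
    rw [hkagree u t hp, hderiv1 u t]
    have hV : ‖A1 (u, t)‖ = V (u, t) := by rw [hVdef]
    rw [hV]
    show -((V (u, t))⁻¹ * (inner ℝ (DTq1 (u, t)) (Nq (u, t)) : ℝ)) * V (u, t)
      = -(inner ℝ (DTq1 (u, t)) (Nq (u, t)) : ℝ)
    field_simp
  have hPid : curveIntegralDs (fun u => α u t₀) (fun u => curvDeriv (fun u => α u t₀) 1 u ^ 2)
      = ∫ u in (-1:ℝ)..1, ksq (u, t₀) ^ 2 * V (u, t₀) := by
    apply intervalIntegral.integral_congr
    intro u hu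
    rw [hIcc] at hu
    show curvDeriv (fun u' => α u' t₀) 1 u ^ 2 * ‖deriv (fun u' => α u' t₀) u‖
      = ksq (u, t₀) ^ 2 * V (u, t₀)
    rw [hksagree u t₀ (hmemIcc u hu), hderiv1 u t₀, hVdef]
  have hev : (fun t => avgCurv (fun u => α u t)) =ᶠ[nhds t₀]
      (fun t => (∫ u in (-1:ℝ)..1, V (u, t))⁻¹ * ∫ u in (-1:ℝ)..1, m (u, t)) := by
    filter_upwards [Metric.closedBall_mem_nhds t₀ hδ'] with t ht
    rw [avgCurv, hLid t, hMid t ht]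
  have hfinal := hcomb.congr_of_eventuallyEq hev
  have hM0 : curveIntegralDs (fun u => α u t₀) (curvature (fun u => α u t₀))
      = ∫ u in (-1:ℝ)..1, m (u, t₀) := hMid t₀ (Metric.mem_closedBall_self hδ'.le)
  rw [hM0, hLid t₀, hPid]
  refine hfinal.congr_deriv ?_
  have hπ := Real.pi_ne_zero
  rw [mul_zero, add_zero, neg_neg, mul_inv_cancel_left₀ (mul_ne_zero two_ne_zero hπ)]
  ring

end
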